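/- Let m, n ≥ 5, and let Λ₁ ⊆ {3,...,m-2} and Λ₂ ⊆ {3,...,n-2} be nonempty index sets. Let u ∈ ℝ^{m-1} with u(1) ≠ 0, u(m-1) ≠ 0, and u(Λ₁) = u(Λ₁ - 1) = 0; let v ∈ ℝ^{n-1} with v(1) ≠ 0, v(n-1) ≠ 0, and v(Λ₂) = v(Λ₂ - 1) = 0. For θ, φ with sin θ, cos θ, sin φ, cos φ all nonzero and sin(φ - θ) ≠ 0, define x(j) = u(j) cos θ - u(j-1) sin θ (conventions u(0)=u(m)=0), y(l) = v(l-1) sin φ - v(l) cos φ (v(0)=v(n)=0), and x', y' with the roles of θ and φ swapped. Then: (a) x(Λ₁) = x'(Λ₁) = 0 and y(Λ₂) = y'(Λ₂) = 0; (b) x(1), x(m), y(1), y(n), x'(1), x'(m), y'(1), y'(n) are all nonzero; (c) x ⋆ y = x' ⋆ y'; (d) x and x' are linearly independent. Hence (x,y) is unidentifiable within K₀(Λ₁, m) × K₀(Λ₂, n). -/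
import Mathlib


open Finset

noncomputable section

/-- Extend a `Fin d`-indexed vector to `ℕ` by zero. -/
def ext0 {d : ℕ} (u : Fin d → ℝ) : ℕ → ℝ := fun j => if h : j < d then u ⟨j, h⟩ else 0

/-- Shifted (delayed by one) extension: value at `j` is `u (j-1)`, zero at `j = 0`. -/
def extm {d : ℕ} (u : Fin d → ℝ) : ℕ → ℝ := fun j => if j = 0 then 0 else ext0 u (j - 1)

/-- Linear convolution of `x ∈ ℝ^m` and `y ∈ ℝ^n`, a vector in `ℝ^{m+n-1}` (0-indexed). -/
def conv {m n : ℕ} (x : Fin m → ℝ) (y : Fin n → ℝ) : Fin (m + n - 1) → ℝ :=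
  fun l => ∑ j : Fin m, ∑ k : Fin n, if (j : ℕ) + (k : ℕ) = (l : ℕ) then x j * y k else 0

/-- The canonical-sparse cone `K₀(Λ,d)` (0-indexed): first and last entries nonzero,
zero on the index set `Λ`. -/
def K0 (Λ : Finset ℕ) (d : ℕ) : Set (Fin d → ℝ) :=
  {w | ext0 w 0 ≠ 0 ∧ ext0 w (d - 1) ≠ 0 ∧ ∀ j ∈ Λ, ext0 w j = 0}

open Polynomial

lemma ext0_lt {d : ℕ} (u : Fin d → ℝ) {j : ℕ} (h : j < d) : ext0 u j = u ⟨j, h⟩ := dif_pos h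
lemma ext0_ge {d : ℕ} (u : Fin d → ℝ) {j : ℕ} (h : d ≤ j) : ext0 u j = 0 := dif_neg (not_lt.2 h)
lemma extm_zero {d : ℕ} (u : Fin d → ℝ) : extm u 0 = 0 := rfl
lemma extm_succ {d : ℕ} (u : Fin d → ℝ) (j : ℕ) : extm u (j+1) = ext0 u j := by simp [extm]
lemma extm_eq {d : ℕ} (u : Fin d → ℝ) {j : ℕ} (h : j ≠ 0) : extm u j = ext0 u (j - 1) := if_neg h

/-- The polynomial with coefficients given by a finite vector. -/
def toPoly {d : ℕ} (x : Fin d → ℝ) : Polynomial ℝ := ∑ j : Fin d, C (x j) * X ^ (j : ℕ)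

lemma toPoly_coeff {d : ℕ} (x : Fin d → ℝ) (k : ℕ) : (toPoly x).coeff k = ext0 x k := by
  classical
  rw [toPoly, finset_sum_coeff]
  simp only [coeff_C_mul, coeff_X_pow, mul_ite, mul_one, mul_zero]
  by_cases h : k < d
  · rw [ext0_lt x h, Finset.sum_eq_single (⟨k, h⟩ : Fin d)]
    · simp
    · intro b _ hb
      rw [if_neg]
      intro hbk
      exact hb (Fin.ext hbk.symm)
    · simp
  · rw [ext0_ge x (le_of_not_gt h)]
    apply Finset.sum_eq_zero
    intro b _
    rw [if_neg]
    intro hbk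
    exact h (hbk.symm ▸ b.isLt)

lemma conv_eq_coeff {m n : ℕ} (x : Fin m → ℝ) (y : Fin n → ℝ) (l : Fin (m + n - 1)) :
    conv x y l = (toPoly x * toPoly y).coeff (l : ℕ) := by
  rw [conv, toPoly, toPoly, Finset.sum_mul]
  simp_rw [Finset.mul_sum]
  rw [finset_sum_coeff]
  refine Finset.sum_congr rfl fun j _ => ?_
  rw [finset_sum_coeff]
  refine Finset.sum_congr rfl fun k _ => ?_
  have : C (x j) * X ^ (j : ℕ) * (C (y k) * X ^ (k : ℕ))
      = C (x j * y k) * X ^ ((j : ℕ) + (k : ℕ)) := by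
    rw [C_mul, pow_add]; ring
  rw [this, coeff_C_mul, coeff_X_pow]
  by_cases h : (j : ℕ) + (k : ℕ) = (l : ℕ)
  · rw [if_pos h, if_pos h.symm, mul_one]
  · rw [if_neg h, if_neg (fun hh => h hh.symm), mul_zero]

/-- Extend the defining identity of `x` from `Fin m` to all of `ℕ`. -/
lemma key_formula {m : ℕ} (hm : 1 ≤ m) (u : Fin (m - 1) → ℝ) (x : Fin m → ℝ) (a b : ℝ)
    (hx : ∀ i : Fin m, x i = ext0 u i * a - extm u i * b) :
    ∀ k : ℕ, ext0 x k = ext0 u k * a - extm u k * b := by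
  intro k
  by_cases h : k < m
  · rw [ext0_lt x h]; exact hx ⟨k, h⟩
  · push_neg at h
    rw [ext0_ge x h, ext0_ge u (by omega), extm_eq u (by omega), ext0_ge u (by omega)]
    ring

lemma toPoly_decomp {m : ℕ} (u : Fin (m - 1) → ℝ) (x : Fin m → ℝ) (a b : ℝ)
    (hx : ∀ k : ℕ, ext0 x k = ext0 u k * a - extm u k * b) :
    toPoly x = C a * toPoly u - C b * (X * toPoly u) := by
  ext k
  rw [coeff_sub, coeff_C_mul, coeff_C_mul, toPoly_coeff, toPoly_coeff, hx k]
  cases k with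
  | zero =>
    have h0 : (X * toPoly u).coeff 0 = 0 := by
      rw [mul_coeff_zero, coeff_X_zero, zero_mul]
    rw [h0, extm_zero]; ring
  | succ k =>
    rw [coeff_X_mul, toPoly_coeff, extm_succ]; ring

/-- the generative construction of unidentifiable canonical-sparse pairs.
Index sets are 0-indexed: `Λ ⊆ {3,…,m-2}` (1-indexed) becomes `Λ ⊆ Icc 2 (m-3)`. -/
theorem sparse_unidentifiable_construction (m n : ℕ) (hm : 5 ≤ m) (hn : 5 ≤ n)
    (Λ₁ Λ₂ : Finset ℕ) (hΛ₁ne : Λ₁.Nonempty) (hΛ₂ne : Λ₂.Nonempty)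
    (hΛ₁ : Λ₁ ⊆ Finset.Icc 2 (m - 3)) (hΛ₂ : Λ₂ ⊆ Finset.Icc 2 (n - 3))
    (u : Fin (m - 1) → ℝ) (v : Fin (n - 1) → ℝ)
    (hu0 : ext0 u 0 ≠ 0) (hum : ext0 u (m - 2) ≠ 0)
    (hv0 : ext0 v 0 ≠ 0) (hvn : ext0 v (n - 2) ≠ 0)
    (huΛ : ∀ j ∈ Λ₁, ext0 u j = 0 ∧ ext0 u (j - 1) = 0)
    (hvΛ : ∀ j ∈ Λ₂, ext0 v j = 0 ∧ ext0 v (j - 1) = 0)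
    (θ φ : ℝ)
    (hsθ : Real.sin θ ≠ 0) (hcθ : Real.cos θ ≠ 0)
    (hsφ : Real.sin φ ≠ 0) (hcφ : Real.cos φ ≠ 0)
    (hθφ : Real.sin (φ - θ) ≠ 0)
    (x x' : Fin m → ℝ) (y y' : Fin n → ℝ)
    (hx : ∀ i : Fin m, x i = ext0 u i * Real.cos θ - extm u i * Real.sin θ)
    (hx' : ∀ i : Fin m, x' i = ext0 u i * Real.cos φ - extm u i * Real.sin φ)
    (hy : ∀ l : Fin n, y l = extm v l * Real.sin φ - ext0 v l * Real.cos φ)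
    (hy' : ∀ l : Fin n, y' l = extm v l * Real.sin θ - ext0 v l * Real.cos θ) :
    (∀ j ∈ Λ₁, ext0 x j = 0 ∧ ext0 x' j = 0) ∧
    (∀ l ∈ Λ₂, ext0 y l = 0 ∧ ext0 y' l = 0) ∧
    (ext0 x 0 ≠ 0 ∧ ext0 x (m - 1) ≠ 0 ∧ ext0 y 0 ≠ 0 ∧ ext0 y (n - 1) ≠ 0 ∧
      ext0 x' 0 ≠ 0 ∧ ext0 x' (m - 1) ≠ 0 ∧ ext0 y' 0 ≠ 0 ∧ ext0 y' (n - 1) ≠ 0) ∧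
    conv x y = conv x' y' ∧
    LinearIndependent ℝ ![x, x'] ∧
    ((x, y) ∈ (K0 Λ₁ m) ×ˢ (K0 Λ₂ n) ∧
      ∃ (x'' : Fin m → ℝ) (y'' : Fin n → ℝ),
        (x'', y'') ∈ (K0 Λ₁ m) ×ˢ (K0 Λ₂ n) ∧ conv x'' y'' = conv x y ∧
        ¬ ∃ α : ℝ, α ≠ 0 ∧ x'' = α • x ∧ y'' = α⁻¹ • y) := by
  -- ℕ-extended formulas for x, x', y, y'
  have hX : ∀ k : ℕ, ext0 x k = ext0 u k * Real.cos θ - extm u k * Real.sin θ :=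
    key_formula (by omega) u x _ _ hx
  have hX' : ∀ k : ℕ, ext0 x' k = ext0 u k * Real.cos φ - extm u k * Real.sin φ :=
    key_formula (by omega) u x' _ _ hx'
  have hY : ∀ k : ℕ, ext0 y k = ext0 v k * (-Real.cos φ) - extm v k * (-Real.sin φ) :=
    key_formula (by omega) v y _ _ (fun i => by rw [hy i]; ring)
  have hY' : ∀ k : ℕ, ext0 y' k = ext0 v k * (-Real.cos θ) - extm v k * (-Real.sin θ) :=
    key_formula (by omega) v y' _ _ (fun i => by rw [hy' i]; ring)
  -- (a) vanishing on the index sets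
  have hxΛ : ∀ j ∈ Λ₁, ext0 x j = 0 ∧ ext0 x' j = 0 := by
    intro j hj
    have hji := Finset.mem_Icc.mp (hΛ₁ hj)
    have h1 := (huΛ j hj).1
    have h2 := (huΛ j hj).2
    have hj0 : j ≠ 0 := by omega
    constructor
    · rw [hX j, extm_eq u hj0, h1, h2]; ring
    · rw [hX' j, extm_eq u hj0, h1, h2]; ring
  have hyΛ : ∀ j ∈ Λ₂, ext0 y j = 0 ∧ ext0 y' j = 0 := by
    intro j hj
    have hji := Finset.mem_Icc.mp (hΛ₂ hj)
    have h1 := (hvΛ j hj).1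
    have h2 := (hvΛ j hj).2
    have hj0 : j ≠ 0 := by omega
    constructor
    · rw [hY j, extm_eq v hj0, h1, h2]; ring
    · rw [hY' j, extm_eq v hj0, h1, h2]; ring
  -- (b) nonvanishing endpoints
  have hx0 : ext0 x 0 ≠ 0 := by
    rw [hX 0, extm_zero]; simpa using mul_ne_zero hu0 hcθ
  have hx'0 : ext0 x' 0 ≠ 0 := by
    rw [hX' 0, extm_zero]; simpa using mul_ne_zero hu0 hcφ
  have hmm : m - 1 - 1 = m - 2 := by omega
  have hnn : n - 1 - 1 = n - 2 := by omega
  have hxm : ext0 x (m - 1) ≠ 0 := by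
    rw [hX (m - 1), extm_eq u (by omega), ext0_ge u (by omega), hmm]
    simpa using mul_ne_zero hum hsθ
  have hx'm : ext0 x' (m - 1) ≠ 0 := by
    rw [hX' (m - 1), extm_eq u (by omega), ext0_ge u (by omega), hmm]
    simpa using mul_ne_zero hum hsφ
  have hy0 : ext0 y 0 ≠ 0 := by
    rw [hY 0, extm_zero]
    simpa using mul_ne_zero hv0 hcφ
  have hy'0 : ext0 y' 0 ≠ 0 := by
    rw [hY' 0, extm_zero]
    simpa using mul_ne_zero hv0 hcθ
  have hyn : ext0 y (n - 1) ≠ 0 := by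
    rw [hY (n - 1), extm_eq v (by omega), ext0_ge v (by omega), hnn]
    simpa using mul_ne_zero hvn hsφ
  have hy'n : ext0 y' (n - 1) ≠ 0 := by
    rw [hY' (n - 1), extm_eq v (by omega), ext0_ge v (by omega), hnn]
    simpa using mul_ne_zero hvn hsθ
  -- (c) equal convolutions via polynomials
  have hPx := toPoly_decomp u x _ _ hX
  have hPx' := toPoly_decomp u x' _ _ hX'
  have hPy := toPoly_decomp v y _ _ hY
  have hPy' := toPoly_decomp v y' _ _ hY'
  have hpoly : toPoly x * toPoly y = toPoly x' * toPoly y' := by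
    rw [hPx, hPx', hPy, hPy']
    simp only [map_neg]
    ring
  have hconv : conv x y = conv x' y' := by
    funext l
    rw [conv_eq_coeff, conv_eq_coeff, hpoly]
  -- (d) linear independence
  have hli : LinearIndependent ℝ ![x, x'] := by
    rw [LinearIndependent.pair_iff]
    intro s t hst
    have h0 := congrFun hst ⟨0, by omega⟩
    have h1 := congrFun hst ⟨m - 1, by omega⟩
    simp only [Pi.add_apply, Pi.smul_apply, smul_eq_mul, Pi.zero_apply, hx, hx'] at h0 h1
    rw [extm_zero] at h0
    rw [extm_eq u (by omega), ext0_ge u (by omega), hmm] at h1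
    have hU1 : ext0 u 0 * (s * Real.cos θ + t * Real.cos φ) = 0 := by
      linear_combination h0
    have hU2 : ext0 u (m - 2) * (s * Real.sin θ + t * Real.sin φ) = 0 := by
      linear_combination -h1
    have e1 := (mul_eq_zero.mp hU1).resolve_left hu0
    have e2 := (mul_eq_zero.mp hU2).resolve_left hum
    have hs : s = 0 := by
      have : s * Real.sin (φ - θ) = 0 := by
        rw [Real.sin_sub]
        linear_combination Real.sin φ * e1 - Real.cos φ * e2
      exact (mul_eq_zero.mp this).resolve_right hθφ
    have ht : t = 0 := by
      have : t * Real.cos φ = 0 := by linear_combination e1 - Real.cos θ * hs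
      exact (mul_eq_zero.mp this).resolve_right hcφ
    exact ⟨hs, ht⟩
  -- assemble
  have hxK : x ∈ K0 Λ₁ m := ⟨hx0, hxm, fun j hj => (hxΛ j hj).1⟩
  have hx'K : x' ∈ K0 Λ₁ m := ⟨hx'0, hx'm, fun j hj => (hxΛ j hj).2⟩
  have hyK : y ∈ K0 Λ₂ n := ⟨hy0, hyn, fun j hj => (hyΛ j hj).1⟩
  have hy'K : y' ∈ K0 Λ₂ n := ⟨hy'0, hy'n, fun j hj => (hyΛ j hj).2⟩
  refine ⟨hxΛ, hyΛ, ⟨hx0, hxm, hy0, hyn, hx'0, hx'm, hy'0, hy'n⟩, hconv, hli, ⟨hxK, hyK⟩,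
    x', y', ⟨hx'K, hy'K⟩, hconv.symm, ?_⟩
  rintro ⟨α, hα, hxa, -⟩
  have := (LinearIndependent.pair_iff.mp hli) α (-1) ?_
  · exact absurd this.2 (by norm_num)
  · rw [hxa]
    funext i
    simp only [Pi.add_apply, Pi.smul_apply, smul_eq_mul, Pi.zero_apply]
    ring
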